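/- arXiv:2410.14802 — 7 statements merged into one kernel-verified Lean document; each statement's English description precedes it below -/
import Mathlib

section
/- Let x : ℝ → ℝ^{d₁} and y : ℝ → ℝ^{d₂} be differentiable curves and let G : ℝ → Matrix (Fin d₁) (Fin d₂) ℝ be any function such that for every t the derivatives satisfy x'(t) = −G(t) · y(t) and y'(t) = −G(t)ᵀ · x(t) (matrix–vector products). Then the quantity ‖x(t)‖² − ‖y(t)‖² is constant in t; equivalently, for every t, the derivative of t ↦ ‖x(t)‖² − ‖y(t)‖² is zero. -/
open scoped RealInnerProductSpace Matrix

/-- Matrix–vector product as a map between Euclidean spaces. -/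
noncomputable def mv {d₁ d₂ : ℕ} (A : Matrix (Fin d₁) (Fin d₂) ℝ)
    (v : EuclideanSpace ℝ (Fin d₂)) : EuclideanSpace ℝ (Fin d₁) :=
  WithLp.toLp 2 (A.mulVec v)

lemma inner_mv_left {d₁ d₂ : ℕ} (A : Matrix (Fin d₁) (Fin d₂) ℝ)
    (v : EuclideanSpace ℝ (Fin d₂)) (w : EuclideanSpace ℝ (Fin d₁)) :
    ⟪mv A v, w⟫ = ⟪v, mv Aᵀ w⟫ := by
  simp only [mv, EuclideanSpace.inner_eq_star_dotProduct, star_trivial,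
    Matrix.dotProduct_mulVec, Matrix.mulVec_transpose]

lemma HasDerivAt.norm_sq_sub_norm_sq {E F : Type*} [NormedAddCommGroup E] [InnerProductSpace ℝ E]
    [NormedAddCommGroup F] [InnerProductSpace ℝ F] {x : ℝ → E} {y : ℝ → F} {x' : E} {y' : F}
    {t : ℝ} (hx : HasDerivAt x x' t) (hy : HasDerivAt y y' t) (h : ⟪x t, x'⟫ = ⟪y t, y'⟫) :
    HasDerivAt (fun s => ‖x s‖ ^ 2 - ‖y s‖ ^ 2) 0 t := by
  have hsub := hx.norm_sq.sub hy.norm_sq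
  rwa [h, sub_self] at hsub

/-- SGD gradient flow on the non-overparametrized problem conserves balancedness. -/
theorem sgd_nop_balancedness_conserved {d₁ d₂ : ℕ}
    (x : ℝ → EuclideanSpace ℝ (Fin d₁)) (y : ℝ → EuclideanSpace ℝ (Fin d₂))
    (G : ℝ → Matrix (Fin d₁) (Fin d₂) ℝ)
    (hx : ∀ t, HasDerivAt x (-(mv (G t) (y t))) t)
    (hy : ∀ t, HasDerivAt y (-(mv (G t)ᵀ (x t))) t) :
    (∀ s t : ℝ, ‖x s‖ ^ 2 - ‖y s‖ ^ 2 = ‖x t‖ ^ 2 - ‖y t‖ ^ 2) ∧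
    (∀ t, HasDerivAt (fun s => ‖x s‖ ^ 2 - ‖y s‖ ^ 2) 0 t) := by
  have hderiv : ∀ t, HasDerivAt (fun s => ‖x s‖ ^ 2 - ‖y s‖ ^ 2) 0 t := fun t =>
    (hx t).norm_sq_sub_norm_sq (hy t) <| by
      rw [inner_neg_right, inner_neg_right, real_inner_comm, inner_mv_left]
  exact ⟨is_const_of_deriv_eq_zero (fun t => (hderiv t).differentiableAt)
    (fun t => (hderiv t).deriv), hderiv⟩
end

section
/- Let x, y : ℝ → ℝ^d be differentiable curves and let c : ℝ → ℝ be any function such that for every t the quantity ‖c(t) • y(t)‖² + ‖c(t) • x(t)‖² is positive and the derivatives satisfy x'(t) = −(c(t) • y(t)) / √(‖c(t) • y(t)‖² + ‖c(t) • x(t)‖²) and y'(t) = −(c(t) • x(t)) / √(‖c(t) • y(t)‖² + ‖c(t) • x(t)‖²). Then ‖x(t)‖² − ‖y(t)‖² is constant in t. -/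
open scoped RealInnerProductSpace

section SwapFlow

variable {E : Type*} [NormedAddCommGroup E] [InnerProductSpace ℝ E] {x y : ℝ → E} {k : ℝ → ℝ}

/-- Along `x' = k • y`, `y' = k • x`, both `‖x‖²` and `‖y‖²` change at the rate `2 k ⟪x, y⟫`. -/
theorem hasDerivAt_norm_sq_sub_norm_sq_of_swap (t : ℝ) (hx : HasDerivAt x (k t • y t) t)
    (hy : HasDerivAt y (k t • x t) t) :
    HasDerivAt (fun s => ‖x s‖ ^ 2 - ‖y s‖ ^ 2) 0 t := by
  refine (hx.norm_sq.sub hy.norm_sq).congr_deriv ?_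
  rw [real_inner_smul_right, real_inner_smul_right, real_inner_comm, sub_self]

theorem norm_sq_sub_norm_sq_eq_of_swap (hx : ∀ t, HasDerivAt x (k t • y t) t)
    (hy : ∀ t, HasDerivAt y (k t • x t) t) (s t : ℝ) :
    ‖x s‖ ^ 2 - ‖y s‖ ^ 2 = ‖x t‖ ^ 2 - ‖y t‖ ^ 2 :=
  have hderiv t := hasDerivAt_norm_sq_sub_norm_sq_of_swap t (hx t) (hy t)
  is_const_of_deriv_eq_zero (fun t => (hderiv t).differentiableAt) (fun t => (hderiv t).deriv) s t

end SwapFlow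

theorem sngd_op_balancedness_conserved_general {d : ℕ}
    (x y : ℝ → EuclideanSpace ℝ (Fin d)) (c : ℝ → ℝ)
    (hx : ∀ t, HasDerivAt x
      (-((Real.sqrt (‖c t • y t‖ ^ 2 + ‖c t • x t‖ ^ 2))⁻¹ • (c t • y t))) t)
    (hy : ∀ t, HasDerivAt y
      (-((Real.sqrt (‖c t • y t‖ ^ 2 + ‖c t • x t‖ ^ 2))⁻¹ • (c t • x t))) t) :
    ∀ s t : ℝ, ‖x s‖ ^ 2 - ‖y s‖ ^ 2 = ‖x t‖ ^ 2 - ‖y t‖ ^ 2 := by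
  set k : ℝ → ℝ := fun t => -((Real.sqrt (‖c t • y t‖ ^ 2 + ‖c t • x t‖ ^ 2))⁻¹ * c t)
  refine norm_sq_sub_norm_sq_eq_of_swap (k := k) (fun t => ?_) (fun t => ?_)
  · simpa only [k, neg_smul, mul_smul] using hx t
  · simpa only [k, neg_smul, mul_smul] using hy t

/-- SNGD gradient flow on the overparametrized problem conserves balancedness. -/
theorem sngd_op_balancedness_conserved {d : ℕ}
    (x y : ℝ → EuclideanSpace ℝ (Fin d)) (c : ℝ → ℝ)
    (hpos : ∀ t, 0 < ‖c t • y t‖ ^ 2 + ‖c t • x t‖ ^ 2)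
    (hx : ∀ t, HasDerivAt x
      (-((Real.sqrt (‖c t • y t‖ ^ 2 + ‖c t • x t‖ ^ 2))⁻¹ • (c t • y t))) t)
    (hy : ∀ t, HasDerivAt y
      (-((Real.sqrt (‖c t • y t‖ ^ 2 + ‖c t • x t‖ ^ 2))⁻¹ • (c t • x t))) t) :
    ∀ s t : ℝ, ‖x s‖ ^ 2 - ‖y s‖ ^ 2 = ‖x t‖ ^ 2 - ‖y t‖ ^ 2 :=
  sngd_op_balancedness_conserved_general x y c hx hy
end

section
/- Let ρ ∈ ℝ, let x : ℝ → ℝ^{d₁}, y : ℝ → ℝ^{d₂} be differentiable curves, let G, G̃ : ℝ → Matrix (Fin d₁) (Fin d₂) ℝ and u : ℝ → ℝ be arbitrary functions, and suppose that for every t the derivatives satisfy x'(t) = −G̃(t)·(y(t) + ρ u(t) • (G(t)ᵀ·x(t))) and y'(t) = −G̃(t)ᵀ·(x(t) + ρ u(t) • (G(t)·y(t))). Then for every t, the derivative of B(t) := ½(‖x(t)‖² − ‖y(t)‖²) equals ρ u(t) (‖G(t)·y(t)‖² − ‖G(t)ᵀ·x(t)‖²) + ρ u(t) (⟪(G̃(t)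 − G(t))·y(t), G(t)·y(t)⟫ − ⟪(G̃(t) − G(t))ᵀ·x(t), G(t)ᵀ·x(t)⟫). -/
/-!
Since `d/dt ½‖x‖² = ⟪x, ẋ⟫` and `d/dt ½‖y‖² = ⟪y, ẏ⟫`, the derivative of the balancedness is
`⟪x, ẋ⟫ - ⟪y, ẏ⟫`. In it the terms `⟪x, G̃ y⟫` and `⟪y, G̃ᵀ x⟫` cancel because `G̃ᵀ` is the adjoint
of `G̃`, and the remaining `ρ u` terms are `ρ u (⟪G̃ y, G y⟫ - ⟪G̃ᵀ x, Gᵀ x⟫)`; splitting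
`G̃ = G + (G̃ - G)` separates the main rate from the error term.
-/

open scoped RealInnerProductSpace Matrix

theorem HasDerivAt.half_norm_sq_sub_half_norm_sq {E F : Type*}
    [NormedAddCommGroup E] [InnerProductSpace ℝ E] [NormedAddCommGroup F] [InnerProductSpace ℝ F]
    {x : ℝ → E} {y : ℝ → F} {x' : E} {y' : F} {t : ℝ}
    (hx : HasDerivAt x x' t) (hy : HasDerivAt y y' t) :
    HasDerivAt (fun s => (1 / 2 : ℝ) * (‖x s‖ ^ 2 - ‖y s‖ ^ 2)) (⟪x t, x'⟫ - ⟪y t, y'⟫) t :=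
  ((hx.norm_sq.sub hy.norm_sq).const_mul (1 / 2 : ℝ)).congr_deriv (by ring)

theorem sam_balancedness_rate_eq {E F : Type*}
    [NormedAddCommGroup E] [InnerProductSpace ℝ E] [FiniteDimensional ℝ E]
    [NormedAddCommGroup F] [InnerProductSpace ℝ F] [FiniteDimensional ℝ F]
    (A A' : F →ₗ[ℝ] E) (c : ℝ) (x : E) (y : F) :
    ⟪x, -A' (y + c • A.adjoint x)⟫ - ⟪y, -A'.adjoint (x + c • A y)⟫
      = c * (‖A y‖ ^ 2 - ‖A.adjoint x‖ ^ 2)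
        + c * (⟪(A' - A) y, A y⟫ - ⟪(A' - A).adjoint x, A.adjoint x⟫) := by
  have adjoint_left : ∀ v, ⟪x, A' v⟫ = ⟪A'.adjoint x, v⟫ :=
    fun v => (A'.adjoint_inner_left v x).symm
  have adjoint_right : ∀ w, ⟪y, A'.adjoint w⟫ = ⟪A' y, w⟫ := A'.adjoint_inner_right y
  simp only [map_add, map_smul, map_sub, LinearMap.sub_apply, inner_neg_right, inner_add_right,
    inner_smul_right, inner_sub_left, adjoint_left, adjoint_right, ← real_inner_self_eq_norm_sq]
  rw [real_inner_comm x (A' y), adjoint_left]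
  ring

theorem mv_eq_toEuclideanLin {d₁ d₂ : ℕ} (A : Matrix (Fin d₁) (Fin d₂) ℝ) :
    mv A = Matrix.toEuclideanLin A := rfl

theorem mv_transpose_eq_adjoint {d₁ d₂ : ℕ} (A : Matrix (Fin d₁) (Fin d₂) ℝ) :
    mv Aᵀ = (Matrix.toEuclideanLin A).adjoint := by
  rw [← Matrix.toEuclideanLin_conjTranspose_eq_adjoint, Matrix.conjTranspose_eq_transpose_of_trivial]
  rfl

/-- Exact dynamics of balancedness under SAM's limiting flow on the
non-overparametrized problem. -/
theorem sam_nop_balancedness_dynamics {d₁ d₂ : ℕ} (ρ : ℝ)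
    (x : ℝ → EuclideanSpace ℝ (Fin d₁)) (y : ℝ → EuclideanSpace ℝ (Fin d₂))
    (G G' : ℝ → Matrix (Fin d₁) (Fin d₂) ℝ) (u : ℝ → ℝ)
    (hx : ∀ t, HasDerivAt x (-(mv (G' t) (y t + (ρ * u t) • mv (G t)ᵀ (x t)))) t)
    (hy : ∀ t, HasDerivAt y (-(mv (G' t)ᵀ (x t + (ρ * u t) • mv (G t) (y t)))) t) :
    ∀ t, HasDerivAt (fun s => (1 / 2 : ℝ) * (‖x s‖ ^ 2 - ‖y s‖ ^ 2))
      (ρ * u t * (‖mv (G t) (y t)‖ ^ 2 - ‖mv (G t)ᵀ (x t)‖ ^ 2)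
        + ρ * u t * (⟪mv (G' t - G t) (y t), mv (G t) (y t)⟫
            - ⟪mv (G' t - G t)ᵀ (x t), mv (G t)ᵀ (x t)⟫)) t := by
  intro t
  simp only [mv_transpose_eq_adjoint] at hx hy ⊢
  simp only [mv_eq_toEuclideanLin] at hx hy ⊢
  refine ((hx t).half_norm_sq_sub_half_norm_sq (hy t)).congr_deriv ?_
  rw [sam_balancedness_rate_eq]
  simp only [map_sub]
end

section
/- Let x ∈ ℝ^{d₁}, y ∈ ℝ^{d₂}, G ∈ Matrix (Fin d₁) (Fin d₂) ℝ with ‖G·y‖² + ‖Gᵀ·x‖² > 0, let ρ ≥ 0, set u := 1/√(‖G·y‖² + ‖Gᵀ·x‖²), and define the SAM-perturbed points x̃ := x + ρ u • (G·y) and ỹ := y + ρ u • (Gᵀ·x). Then ‖x̃ ỹᵀ − x yᵀ‖_F ≤ ρ (‖x‖ + ‖y‖) + ρ²/2, where x̃ ỹᵀ and x yᵀ denote outer products and ‖·‖_F the Frobenius norm. -/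
open scoped RealInnerProductSpace Matrix

/-- The outer product of two vectors, as a matrix. -/
noncomputable def outer {d₁ d₂ : ℕ} (x : EuclideanSpace ℝ (Fin d₁))
    (y : EuclideanSpace ℝ (Fin d₂)) : Matrix (Fin d₁) (Fin d₂) ℝ :=
  Matrix.vecMulVec x y

/-- The Frobenius norm of a real matrix. -/
noncomputable def frob {d₁ d₂ : ℕ} (A : Matrix (Fin d₁) (Fin d₂) ℝ) : ℝ :=
  Real.sqrt (∑ i, ∑ j, (A i j) ^ 2)


/-!
Expanding the product, `x̃ ỹᵀ - x yᵀ = ρ (p yᵀ + x qᵀ) + ρ² p qᵀ` with `p = u G y`, `q = u Gᵀ x`.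
The normalization `u` makes `‖p‖² + ‖q‖² ≤ 1`, so `‖p‖, ‖q‖ ≤ 1` and `‖p‖ ‖q‖ ≤ 1/2`, while the
Frobenius norm of an outer product is at most the product of the norms.
-/

attribute [local instance] Matrix.frobeniusSeminormedAddCommGroup
  Matrix.frobeniusNormedAddCommGroup Matrix.frobeniusNormedSpace

section Outer

variable {d₁ d₂ : ℕ}

lemma frob_eq_norm (A : Matrix (Fin d₁) (Fin d₂) ℝ) : frob A = ‖A‖ := by
  rw [Matrix.frobenius_norm_def, frob, Real.sqrt_eq_rpow]
  congr 1
  refine Finset.sum_congr rfl fun i _ => Finset.sum_congr rfl fun j _ => ?_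
  rw [Real.norm_eq_abs, Real.rpow_two, sq_abs]

lemma norm_outer_le (a : EuclideanSpace ℝ (Fin d₁)) (b : EuclideanSpace ℝ (Fin d₂)) :
    ‖outer a b‖ ≤ ‖a‖ * ‖b‖ := by
  rw [outer, Matrix.vecMulVec_eq Unit]
  simpa using Matrix.frobenius_norm_mul (Matrix.replicateCol Unit ⇑a) (Matrix.replicateRow Unit ⇑b)

lemma outer_add_smul_add_smul_sub (a p : EuclideanSpace ℝ (Fin d₁))
    (b q : EuclideanSpace ℝ (Fin d₂)) (s : ℝ) :
    outer (a + s • p) (b + s • q) - outer a b = s • (outer p b + outer a q) + s ^ 2 • outer p q := by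
  ext i j
  simp only [outer, Matrix.vecMulVec_apply, Matrix.sub_apply, Matrix.add_apply, Matrix.smul_apply,
    PiLp.add_apply, PiLp.smul_apply, smul_eq_mul]
  ring

lemma norm_outer_add_smul_add_smul_sub_le (a p : EuclideanSpace ℝ (Fin d₁))
    (b q : EuclideanSpace ℝ (Fin d₂)) {s : ℝ} (hs : 0 ≤ s) :
    ‖outer (a + s • p) (b + s • q) - outer a b‖
      ≤ s * (‖p‖ * ‖b‖ + ‖a‖ * ‖q‖) + s ^ 2 * (‖p‖ * ‖q‖) := by
  rw [outer_add_smul_add_smul_sub]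
  calc ‖s • (outer p b + outer a q) + s ^ 2 • outer p q‖
      ≤ s * (‖outer p b‖ + ‖outer a q‖) + s ^ 2 * ‖outer p q‖ := by
        refine (norm_add_le _ _).trans ?_
        rw [norm_smul, norm_smul, Real.norm_of_nonneg hs, Real.norm_of_nonneg (by positivity)]
        gcongr
        exact norm_add_le _ _
    _ ≤ s * (‖p‖ * ‖b‖ + ‖a‖ * ‖q‖) + s ^ 2 * (‖p‖ * ‖q‖) := by
        gcongr <;> exact norm_outer_le _ _

lemma norm_outer_add_smul_add_smul_sub_le_of_sq_add_sq_le_one (a p : EuclideanSpace ℝ (Fin d₁))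
    (b q : EuclideanSpace ℝ (Fin d₂)) {ρ : ℝ} (hρ : 0 ≤ ρ) (hpq : ‖p‖ ^ 2 + ‖q‖ ^ 2 ≤ 1) :
    ‖outer (a + ρ • p) (b + ρ • q) - outer a b‖ ≤ ρ * (‖a‖ + ‖b‖) + ρ ^ 2 / 2 := by
  have hp : ‖p‖ ≤ 1 := by nlinarith [norm_nonneg p, sq_nonneg ‖q‖]
  have hq : ‖q‖ ≤ 1 := by nlinarith [norm_nonneg q, sq_nonneg ‖p‖]
  have hpq' : ‖p‖ * ‖q‖ ≤ 1 / 2 := by nlinarith [sq_nonneg (‖p‖ - ‖q‖)]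
  refine (norm_outer_add_smul_add_smul_sub_le a p b q hρ).trans ?_
  calc ρ * (‖p‖ * ‖b‖ + ‖a‖ * ‖q‖) + ρ ^ 2 * (‖p‖ * ‖q‖)
      ≤ ρ * (1 * ‖b‖ + ‖a‖ * 1) + ρ ^ 2 * (1 / 2) := by gcongr
    _ = ρ * (‖a‖ + ‖b‖) + ρ ^ 2 / 2 := by ring

end Outer

lemma norm_inv_sqrt_smul_sq_add_sq_le_one {E F : Type*} [SeminormedAddCommGroup E]
    [NormedSpace ℝ E] [SeminormedAddCommGroup F] [NormedSpace ℝ F] (p : E) (q : F) :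
    ‖(√(‖p‖ ^ 2 + ‖q‖ ^ 2))⁻¹ • p‖ ^ 2 + ‖(√(‖p‖ ^ 2 + ‖q‖ ^ 2))⁻¹ • q‖ ^ 2 ≤ 1 := by
  have hS : 0 ≤ ‖p‖ ^ 2 + ‖q‖ ^ 2 := by positivity
  simp only [norm_smul, mul_pow, norm_inv, Real.norm_of_nonneg (Real.sqrt_nonneg _), inv_pow,
    Real.sq_sqrt hS, ← mul_add]
  exact inv_mul_le_one_of_le₀ le_rfl hS

theorem sam_nop_product_displacement_bound_general {d₁ d₂ : ℕ}
    (x : EuclideanSpace ℝ (Fin d₁)) (y : EuclideanSpace ℝ (Fin d₂))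
    (G : Matrix (Fin d₁) (Fin d₂) ℝ)
    (ρ : ℝ) (hρ : 0 ≤ ρ)
    (u : ℝ) (hu : u = (Real.sqrt (‖mv G y‖ ^ 2 + ‖mv Gᵀ x‖ ^ 2))⁻¹) :
    frob (outer (x + (ρ * u) • mv G y) (y + (ρ * u) • mv Gᵀ x) - outer x y)
      ≤ ρ * (‖x‖ + ‖y‖) + ρ ^ 2 / 2 := by
  rw [frob_eq_norm, mul_smul, mul_smul, hu]
  exact norm_outer_add_smul_add_smul_sub_le_of_sq_add_sq_le_one x _ y _ hρ
    (norm_inv_sqrt_smul_sq_add_sq_le_one _ _)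

/-- The SAM perturbation displaces the outer product x yᵀ by at most
ρ(‖x‖ + ‖y‖) + ρ²/2 in Frobenius norm. -/
theorem sam_nop_product_displacement_bound {d₁ d₂ : ℕ}
    (x : EuclideanSpace ℝ (Fin d₁)) (y : EuclideanSpace ℝ (Fin d₂))
    (G : Matrix (Fin d₁) (Fin d₂) ℝ)
    (hpos : 0 < ‖mv G y‖ ^ 2 + ‖mv Gᵀ x‖ ^ 2)
    (ρ : ℝ) (hρ : 0 ≤ ρ)
    (u : ℝ) (hu : u = (Real.sqrt (‖mv G y‖ ^ 2 + ‖mv Gᵀ x‖ ^ 2))⁻¹) :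
    frob (outer (x + (ρ * u) • mv G y) (y + (ρ * u) • mv Gᵀ x) - outer x y)
      ≤ ρ * (‖x‖ + ‖y‖) + ρ ^ 2 / 2 :=
  sam_nop_product_displacement_bound_general x y G ρ hρ u hu
end

section
/- Let ρ ∈ ℝ, let x, y : ℝ → ℝ^d be differentiable curves, and let c̃, u : ℝ → ℝ be arbitrary functions such that for every t the derivatives satisfy x'(t) = −c̃(t) • (y(t) + ρ u(t) • x(t)) and y'(t) = −c̃(t) • (x(t) + ρ u(t) • y(t)). Then for every t, the derivative of B(t) := ½(‖x(t)‖² − ‖y(t)‖²) equals −2 ρ u(t) c̃(t) B(t). -/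
open scoped RealInnerProductSpace

/-!
Differentiating, `B' = ⟪x, x'⟫ - ⟪y, y'⟫`. The cross terms `c̃ ⟪x, y⟫` and `c̃ ⟪y, x⟫` cancel by
symmetry of the inner product, leaving `-c̃ ρ u (‖x‖² - ‖y‖²) = -2 ρ u c̃ B`.
-/

section

variable {E : Type*} [NormedAddCommGroup E] [InnerProductSpace ℝ E]

theorem inner_smul_add_sub_inner_smul_add (x y : E) (c a : ℝ) :
    ⟪x, c • (y + a • x)⟫ - ⟪y, c • (x + a • y)⟫ = c * a * (‖x‖ ^ 2 - ‖y‖ ^ 2) := by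
  simp only [inner_smul_right, inner_add_right, real_inner_self_eq_norm_sq, real_inner_comm x y]
  ring

theorem HasDerivAt.half_norm_sq_sub_norm_sq {x y : ℝ → E} {c a : ℝ → ℝ} {t : ℝ}
    (hx : HasDerivAt x (-(c t • (y t + a t • x t))) t)
    (hy : HasDerivAt y (-(c t • (x t + a t • y t))) t) :
    HasDerivAt (fun s => (1 / 2 : ℝ) * (‖x s‖ ^ 2 - ‖y s‖ ^ 2))
      (-(c t * a t) * (‖x t‖ ^ 2 - ‖y t‖ ^ 2)) t := by
  refine ((hx.norm_sq.sub hy.norm_sq).const_mul (1 / 2 : ℝ)).congr_deriv ?_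
  simp only [inner_neg_right]
  linear_combination -inner_smul_add_sub_inner_smul_add (x t) (y t) (c t) (a t)

end

/-- Exact dynamics of balancedness under SAM's limiting flow on the
overparametrized problem: `B' = −2 ρ u c̃ B`. -/
theorem sam_op_balancedness_dynamics {d : ℕ} (ρ : ℝ)
    (x y : ℝ → EuclideanSpace ℝ (Fin d)) (c' u : ℝ → ℝ)
    (hx : ∀ t, HasDerivAt x (-(c' t • (y t + (ρ * u t) • x t))) t)
    (hy : ∀ t, HasDerivAt y (-(c' t • (x t + (ρ * u t) • y t))) t) :
    ∀ t, HasDerivAt (fun s => (1 / 2 : ℝ) * (‖x s‖ ^ 2 - ‖y s‖ ^ 2))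
      (-2 * ρ * u t * c' t * ((1 / 2 : ℝ) * (‖x t‖ ^ 2 - ‖y t‖ ^ 2))) t := by
  intro t
  have hB := HasDerivAt.half_norm_sq_sub_norm_sq (a := fun s => ρ * u s) (hx t) (hy t)
  exact hB.congr_deriv (by ring)
end

section
/- Let ρ > 0, let x, y : ℝ → ℝ^d be differentiable curves with ‖x(t)‖² + ‖y(t)‖² > 0 for all t, let c, c̃ : ℝ → ℝ and δ : ℝ → ℝ satisfy |c̃(t) − c(t)| ≤ δ(t) with δ(t) ≥ 0, define u(t) := sign(c(t)) / √(‖x(t)‖² + ‖y(t)‖²), and suppose x'(t) = −c̃(t) • (y(t) + ρ u(t) • x(t)) and y'(t) = −c̃(t) • (x(t) + ρ u(t) • y(t)). Let B(t) := ½(‖x(t)‖² − ‖y(t)‖²). Then for every t: (i) ρ|c(t)|·|‖x(t)‖ − ‖y(t)‖| − 2ρ δ(t) |B(t)|/√(‖x(t)‖² + ‖y(t)‖²) ≤ |B'(t)| ≤ ρ|c(t)| √(2|B(t)|) + 2ρ δ(t) |B(t)|/√(‖x(t)‖² + ‖y(t)‖²); and (ii) if B(t) ≠ 0 and |c(t)|·|‖x(t)‖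 − ‖y(t)‖| > 2 δ(t) |B(t)|/√(‖x(t)‖² + ‖y(t)‖²), then B(t)·B'(t) < 0, i.e., the magnitude of B is strictly decreasing at t. -/
/-!
Along the flow `B' = ⟪x, x'⟫ - ⟪y, y'⟫ = -2 ρ c̃ u B`: the cross terms `c̃ ⟪x, y⟫` cancel.
With `u = sign c / s`, `s = √(‖x‖² + ‖y‖²)`, this reads `|B'| = ρ |sign c · c̃| r` for the
rate factor `r = 2 |B| / s`. The coefficient `sign c · c̃` lies within `δ` of `|c|`, and
`2 |B| = |‖x‖² - ‖y‖²| = |‖x‖ - ‖y‖| (‖x‖ + ‖y‖)` with `s ≤ ‖x‖ + ‖y‖` and `2 |B| ≤ s²`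
gives `|‖x‖ - ‖y‖| ≤ r ≤ √(2 |B|)`. Both bounds follow; when `δ r < |c| |‖x‖ - ‖y‖|` the
coefficient is positive, so `B B' = -2 ρ (sign c · c̃) B² / s < 0`.
-/

open scoped RealInnerProductSpace

theorem Real.abs_sign_mul_sub_abs_le (a b : ℝ) : |Real.sign a * b - (|a|)| ≤ |b - a| := by
  rcases lt_trichotomy a 0 with ha | rfl | ha
  · rw [Real.sign_of_neg ha, abs_of_neg ha, ← abs_neg]; ring_nf; rfl
  · simp
  · rw [Real.sign_of_pos ha, abs_of_pos ha, one_mul]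

theorem hasDerivAt_balancedness_of_flow {E : Type*} [NormedAddCommGroup E]
    [InnerProductSpace ℝ E] {x y : ℝ → E} {k m t : ℝ}
    (hx : HasDerivAt x (-(k • (y t + m • x t))) t)
    (hy : HasDerivAt y (-(k • (x t + m • y t))) t) :
    HasDerivAt (fun τ ↦ (1 / 2 : ℝ) * (‖x τ‖ ^ 2 - ‖y τ‖ ^ 2))
      (-(2 * k * m) * ((1 / 2 : ℝ) * (‖x t‖ ^ 2 - ‖y t‖ ^ 2))) t := by
  refine ((hx.norm_sq.sub hy.norm_sq).const_mul (1 / 2 : ℝ)).congr_deriv ?_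
  simp only [inner_neg_right, inner_smul_right, inner_add_right, real_inner_self_eq_norm_sq,
    real_inner_comm (x t) (y t)]
  ring

theorem div_le_sqrt_of_le_sq {q s : ℝ} (hq : 0 ≤ q) (h : q ≤ s ^ 2) : q / s ≤ √q := by
  rcases le_or_gt s 0 with hs | hs
  · exact (div_nonpos_of_nonneg_of_nonpos hq hs).trans (Real.sqrt_nonneg q)
  rw [div_le_iff₀ hs]
  calc q = √q * √q := (Real.mul_self_sqrt hq).symm
    _ ≤ √q * s := by gcongr; exact Real.sqrt_le_iff.2 ⟨hs.le, h⟩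

theorem abs_sq_sub_sq_div_sqrt_le (a b : ℝ) :
    |a ^ 2 - b ^ 2| / √(a ^ 2 + b ^ 2) ≤ √|a ^ 2 - b ^ 2| := by
  refine div_le_sqrt_of_le_sq (abs_nonneg _) ?_
  rw [Real.sq_sqrt (by positivity), abs_le]
  constructor <;> nlinarith [sq_nonneg a, sq_nonneg b]

theorem abs_sub_le_abs_sq_sub_sq_div_sqrt {a b : ℝ} (ha : 0 ≤ a) (hb : 0 ≤ b) :
    |a - b| ≤ |a ^ 2 - b ^ 2| / √(a ^ 2 + b ^ 2) := by
  rcases (Real.sqrt_nonneg (a ^ 2 + b ^ 2)).eq_or_lt with hs | hs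
  · obtain ⟨rfl, rfl⟩ : a = 0 ∧ b = 0 := by
      rw [eq_comm, Real.sqrt_eq_zero (by positivity)] at hs
      constructor <;> nlinarith
    simp
  have hab : 0 ≤ a + b := add_nonneg ha hb
  rw [le_div_iff₀ hs, sq_sub_sq, abs_mul, abs_of_nonneg hab, mul_comm]
  gcongr
  exact Real.sqrt_le_iff.2 ⟨hab, by nlinarith [mul_nonneg ha hb]⟩

section PerturbedRate

variable {ρ K c δ r lo : ℝ}

theorem perturbed_rate_bounds {hi : ℝ} (hρ : 0 ≤ ρ) (hK : |K - (|c|)| ≤ δ)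
    (hlo0 : 0 ≤ lo) (hlo : lo ≤ r) (hhi : r ≤ hi) :
    ρ * |c| * lo - ρ * δ * r ≤ ρ * |K| * r ∧ ρ * |K| * r ≤ ρ * |c| * hi + ρ * δ * r := by
  have hKlo : |c| - δ ≤ |K| := by
    linarith [abs_sub_abs_le_abs_sub (|c|) K, abs_sub_comm K (|c|), abs_abs c]
  have hKhi : |K| ≤ |c| + δ := by
    linarith [abs_sub_abs_le_abs_sub K (|c|), abs_abs c]
  have hr : 0 ≤ r := hlo0.trans hlo
  constructor
  · nlinarith [mul_le_mul_of_nonneg_left hKlo (mul_nonneg hρ hr),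
      mul_le_mul_of_nonneg_left hlo (mul_nonneg hρ (abs_nonneg c))]
  · nlinarith [mul_le_mul_of_nonneg_left hKhi (mul_nonneg hρ hr),
      mul_le_mul_of_nonneg_left hhi (mul_nonneg hρ (abs_nonneg c))]

theorem pos_of_perturbed_rate_lt (hK : |K - (|c|)| ≤ δ) (hlo0 : 0 ≤ lo) (hlo : lo ≤ r)
    (h : δ * r < |c| * lo) : 0 < K := by
  have hδc : δ < |c| := by
    by_contra! hcδ
    nlinarith [mul_le_mul_of_nonneg_left hlo (abs_nonneg c)]
  linarith [(abs_le.1 hK).1]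

end PerturbedRate

theorem sam_op_balancedness_rate_bounds_general {d : ℕ} (ρ : ℝ) (hρ : 0 < ρ)
    (x y : ℝ → EuclideanSpace ℝ (Fin d))
    (hpos : ∀ t, 0 < ‖x t‖ ^ 2 + ‖y t‖ ^ 2)
    (c c' δ : ℝ → ℝ)
    (hδ : ∀ t, |c' t - c t| ≤ δ t)
    (u : ℝ → ℝ)
    (hu : ∀ t, u t = Real.sign (c t) / Real.sqrt (‖x t‖ ^ 2 + ‖y t‖ ^ 2))
    (hx : ∀ t, HasDerivAt x (-(c' t • (y t + (ρ * u t) • x t))) t)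
    (hy : ∀ t, HasDerivAt y (-(c' t • (x t + (ρ * u t) • y t))) t)
    (B : ℝ → ℝ) (hB : ∀ t, B t = (1 / 2 : ℝ) * (‖x t‖ ^ 2 - ‖y t‖ ^ 2)) :
    ∀ t,
      (ρ * |c t| * |‖x t‖ - ‖y t‖|
          - 2 * ρ * δ t * |B t| / Real.sqrt (‖x t‖ ^ 2 + ‖y t‖ ^ 2)
        ≤ |deriv B t| ∧
       |deriv B t|
        ≤ ρ * |c t| * Real.sqrt (2 * |B t|)
          + 2 * ρ * δ t * |B t| / Real.sqrt (‖x t‖ ^ 2 + ‖y t‖ ^ 2)) ∧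
      (B t ≠ 0 →
        2 * δ t * |B t| / Real.sqrt (‖x t‖ ^ 2 + ‖y t‖ ^ 2)
          < |c t| * |‖x t‖ - ‖y t‖| →
        B t * deriv B t < 0) := by
  intro t
  set s := √(‖x t‖ ^ 2 + ‖y t‖ ^ 2)
  have hs : 0 < s := Real.sqrt_pos.2 (hpos t)
  generalize hK_def : Real.sign (c t) * c' t = K
  have hK : |K - (|c t|)| ≤ δ t := hK_def ▸ (Real.abs_sign_mul_sub_abs_le _ _).trans (hδ t)
  have hBderiv : HasDerivAt B (-(2 * c' t * (ρ * u t)) * B t) t := by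
    simpa only [← hB] using hasDerivAt_balancedness_of_flow (hx t) (hy t)
  have hderiv : deriv B t = -(ρ * K) * (2 * B t / s) := by
    rw [hBderiv.deriv, hu t, ← hK_def]; ring
  generalize hr_def : 2 * |B t| / s = r
  have h2B : 2 * |B t| = |‖x t‖ ^ 2 - ‖y t‖ ^ 2| := by
    rw [hB t, abs_mul, abs_of_pos one_half_pos]; ring
  have hr_lo : |‖x t‖ - ‖y t‖| ≤ r := by
    rw [← hr_def, h2B]; exact abs_sub_le_abs_sq_sub_sq_div_sqrt (norm_nonneg _) (norm_nonneg _)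
  have hr_hi : r ≤ √(2 * |B t|) := by
    rw [← hr_def, h2B]; exact abs_sq_sub_sq_div_sqrt_le _ _
  have habs : |deriv B t| = ρ * |K| * r := by
    rw [hderiv, abs_mul, abs_neg, abs_mul, abs_of_pos hρ, abs_div, abs_mul, abs_two,
      abs_of_pos hs, ← hr_def]
  rw [habs, show 2 * ρ * δ t * |B t| / s = ρ * δ t * r by rw [← hr_def]; ring,
    show 2 * δ t * |B t| / s = δ t * r by rw [← hr_def]; ring]
  refine ⟨perturbed_rate_bounds hρ.le hK (abs_nonneg _) hr_lo hr_hi, fun hB0 hlt ↦ ?_⟩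
  have hKpos : 0 < K := pos_of_perturbed_rate_lt hK (abs_nonneg _) hr_lo hlt
  calc B t * deriv B t = -(ρ * K * (2 * B t ^ 2 / s)) := by rw [hderiv]; ring
    _ < 0 := neg_neg_of_pos (by positivity)

/-- Theorem 4: two-sided rate bounds on the balancedness `B` under SAM's limiting
flow for the overparametrized problem, and strict decrease of `|B|` when the
driving term dominates the error. -/
theorem sam_op_balancedness_rate_bounds {d : ℕ} (ρ : ℝ) (hρ : 0 < ρ)
    (x y : ℝ → EuclideanSpace ℝ (Fin d))
    (hpos : ∀ t, 0 < ‖x t‖ ^ 2 + ‖y t‖ ^ 2)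
    (c c' δ : ℝ → ℝ)
    (hδ0 : ∀ t, 0 ≤ δ t)
    (hδ : ∀ t, |c' t - c t| ≤ δ t)
    (u : ℝ → ℝ)
    (hu : ∀ t, u t = Real.sign (c t) / Real.sqrt (‖x t‖ ^ 2 + ‖y t‖ ^ 2))
    (hx : ∀ t, HasDerivAt x (-(c' t • (y t + (ρ * u t) • x t))) t)
    (hy : ∀ t, HasDerivAt y (-(c' t • (x t + (ρ * u t) • y t))) t)
    (B : ℝ → ℝ) (hB : ∀ t, B t = (1 / 2 : ℝ) * (‖x t‖ ^ 2 - ‖y t‖ ^ 2)) :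
    ∀ t,
      (ρ * |c t| * |‖x t‖ - ‖y t‖|
          - 2 * ρ * δ t * |B t| / Real.sqrt (‖x t‖ ^ 2 + ‖y t‖ ^ 2)
        ≤ |deriv B t| ∧
       |deriv B t|
        ≤ ρ * |c t| * Real.sqrt (2 * |B t|)
          + 2 * ρ * δ t * |B t| / Real.sqrt (‖x t‖ ^ 2 + ‖y t‖ ^ 2)) ∧
      (B t ≠ 0 →
        2 * δ t * |B t| / Real.sqrt (‖x t‖ ^ 2 + ‖y t‖ ^ 2)
          < |c t| * |‖x t‖ - ‖y t‖| →
        B t * deriv B t < 0) :=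
  sam_op_balancedness_rate_bounds_general ρ hρ x y hpos c c' δ hδ u hu hx hy B hB
end

section
/- Let ρ ∈ ℝ, m ≥ 1, let x, y : ℝ → ℝ^d be differentiable curves, and let c̃ᵢ, uᵢ : ℝ → ℝ for i ∈ Fin m be arbitrary functions such that for every t the derivatives satisfy x'(t) = −(1/m) ∑_{i} c̃ᵢ(t) • (y(t) + ρ uᵢ(t) • x(t)) and y'(t) = −(1/m) ∑_{i} c̃ᵢ(t) • (x(t) + ρ uᵢ(t) • y(t)). Then for every t, the derivative of B(t) := ½(‖x(t)‖² − ‖y(t)‖²) equals −(2ρ/m) (∑_{i} uᵢ(t) c̃ᵢ(t)) B(t). -/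
open scoped RealInnerProductSpace

/-!
Collect the flow as `x' = -(a • y + b • x)`, `y' = -(a • x + b • y)` with `a = (1/m) ∑ c̃ᵢ` and
`b = (ρ/m) ∑ uᵢ c̃ᵢ`. The coupling terms contribute `-a ⟪x, y⟫` to `½ (‖x‖²)'` and the same to
`½ (‖y‖²)'`, so they cancel in the difference, leaving `B' = -b (‖x‖² - ‖y‖²) = -2b B`.
-/

section Balancedness

variable {E : Type*} [NormedAddCommGroup E] [InnerProductSpace ℝ E]

theorem HasDerivAt.half_norm_sq_sub {x y : ℝ → E} {x' y' : E} {t : ℝ}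
    (hx : HasDerivAt x x' t) (hy : HasDerivAt y y' t) :
    HasDerivAt (fun s => (1 / 2 : ℝ) * (‖x s‖ ^ 2 - ‖y s‖ ^ 2)) (⟪x t, x'⟫ - ⟪y t, y'⟫) t :=
  ((hx.norm_sq.sub hy.norm_sq).const_mul (1 / 2 : ℝ)).congr_deriv (by ring)

theorem HasDerivAt.balancedness_of_coupled_flow {x y : ℝ → E} {t a b : ℝ}
    (hx : HasDerivAt x (-(a • y t + b • x t)) t) (hy : HasDerivAt y (-(a • x t + b • y t)) t) :
    HasDerivAt (fun s => (1 / 2 : ℝ) * (‖x s‖ ^ 2 - ‖y s‖ ^ 2))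
      (-(2 * b) * ((1 / 2 : ℝ) * (‖x t‖ ^ 2 - ‖y t‖ ^ 2))) t := by
  refine (hx.half_norm_sq_sub hy).congr_deriv ?_
  simp only [inner_neg_right, inner_add_right, real_inner_smul_right, real_inner_self_eq_norm_sq,
    real_inner_comm (x t) (y t)]
  ring

end Balancedness

theorem Finset.sum_smul_add_smul {ι R M : Type*} [CommSemiring R] [AddCommMonoid M] [Module R M]
    (s : Finset ι) (c r : ι → R) (v w : M) :
    ∑ i ∈ s, c i • (v + r i • w) = (∑ i ∈ s, c i) • v + (∑ i ∈ s, r i * c i) • w := by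
  simp only [smul_add, smul_smul, Finset.sum_add_distrib, Finset.sum_smul, mul_comm]

theorem m_sharpness_op_balancedness_dynamics_general {d : ℕ} (ρ : ℝ) (m : ℕ)
    (x y : ℝ → EuclideanSpace ℝ (Fin d))
    (c' u : Fin m → ℝ → ℝ)
    (hx : ∀ t, HasDerivAt x
      (-((m : ℝ)⁻¹ • ∑ i : Fin m, c' i t • (y t + (ρ * u i t) • x t))) t)
    (hy : ∀ t, HasDerivAt y
      (-((m : ℝ)⁻¹ • ∑ i : Fin m, c' i t • (x t + (ρ * u i t) • y t))) t) :
    ∀ t, HasDerivAt (fun s => (1 / 2 : ℝ) * (‖x s‖ ^ 2 - ‖y s‖ ^ 2))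
      (-(2 * ρ / (m : ℝ)) * (∑ i : Fin m, u i t * c' i t)
        * ((1 / 2 : ℝ) * (‖x t‖ ^ 2 - ‖y t‖ ^ 2))) t := by
  intro t
  set a := (m : ℝ)⁻¹ * ∑ i, c' i t
  set b := (m : ℝ)⁻¹ * ∑ i, ρ * u i t * c' i t
  have hx_flow : HasDerivAt x (-(a • y t + b • x t)) t := by
    convert hx t using 2
    rw [Finset.sum_smul_add_smul, smul_add, smul_smul, smul_smul]
  have hy_flow : HasDerivAt y (-(a • x t + b • y t)) t := by
    convert hy t using 2
    rw [Finset.sum_smul_add_smul, smul_add, smul_smul, smul_smul]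
  refine (hx_flow.balancedness_of_coupled_flow hy_flow).congr_deriv ?_
  simp only [b, mul_assoc, ← Finset.mul_sum]
  ring

/-- Exact balancedness dynamics of m-sharpness SAM on the overparametrized problem:
`B' = −(2ρ/m) (∑ᵢ uᵢ c̃ᵢ) B`. -/
theorem m_sharpness_op_balancedness_dynamics {d : ℕ} (ρ : ℝ) (m : ℕ) (hm : 1 ≤ m)
    (x y : ℝ → EuclideanSpace ℝ (Fin d))
    (c' u : Fin m → ℝ → ℝ)
    (hx : ∀ t, HasDerivAt x
      (-((m : ℝ)⁻¹ • ∑ i : Fin m, c' i t • (y t + (ρ * u i t) • x t))) t)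
    (hy : ∀ t, HasDerivAt y
      (-((m : ℝ)⁻¹ • ∑ i : Fin m, c' i t • (x t + (ρ * u i t) • y t))) t) :
    ∀ t, HasDerivAt (fun s => (1 / 2 : ℝ) * (‖x s‖ ^ 2 - ‖y s‖ ^ 2))
      (-(2 * ρ / (m : ℝ)) * (∑ i : Fin m, u i t * c' i t)
        * ((1 / 2 : ℝ) * (‖x t‖ ^ 2 - ‖y t‖ ^ 2))) t :=
  m_sharpness_op_balancedness_dynamics_general ρ m x y c' u hx hy
end
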